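/- For every even integer t ≥ 6 with t ≡ 2 (mod 4) and every integer k ≥ 0, the multiset {1, 2^{t−2}, t^{tk+1}} admits a linear realization on {0, 1, …, tk + 2t − 2}, given explicitly by: start at 0 and go up by steps of t to tk+t, step down by 2 to tk+t−2 and go down by t to t−2, continue alternating until reaching the class of 2, go from 2 up to tk+2, step down by 1 to tk+1, go down to 1, step up by 2 to 3, go up to tk+3, and so on, ending at tk+t−1; i.e., the path [0→tk+t, tk+t−2→t−2, …, tk+4→4, 2→tk+2, tk+1→1, 3→tk+3, …, tk+t−1→t−1] where x→y denotes an arithmetic progression with common difference ±t. -/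

import Mathlib

/-- Multiset of absolute differences of consecutive entries of a list. -/
def pathDiffs (l : List ℕ) : Multiset ℕ :=
  ↑(List.zipWith (fun x y => max x y - min x y) l l.tail)

/-- `l` is a linear realization of the multiset `L`: a permutation of
`{0, …, |L|}` whose multiset of consecutive absolute differences is `L`. -/
def IsLinReal (L : Multiset ℕ) (l : List ℕ) : Prop :=
  l.Perm (List.range (Multiset.card L + 1)) ∧ pathDiffs l = L

/-- The cyclic edge-length `ℓ(x,y) = min(|x−y|, v−|x−y|)` in `K_v`. -/
def cycLen (v x y : ℕ) : ℕ := min (max x y - min x y) (v - (max x y - min x y))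

def cycDiffs (v : ℕ) (l : List ℕ) : Multiset ℕ :=
  ↑(List.zipWith (cycLen v) l l.tail)

/-- `l` is a cyclic realization of `L`: a Hamiltonian path of `K_v` on
`{0, …, v−1}` (with `v = |L|+1`) whose multiset of cyclic edge-lengths is `L`. -/
def IsCycReal (L : Multiset ℕ) (l : List ℕ) : Prop :=
  l.Perm (List.range (Multiset.card L + 1)) ∧
    cycDiffs (Multiset.card L + 1) l = L

/-- Vertices `a` and `b` are adjacent (consecutive, in either order) in the path `l`. -/
def AdjIn (a b : ℕ) (l : List ℕ) : Prop :=
  [a, b] <:+: l ∨ [b, a] <:+: l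

/-- The endpoints of the path `l` are `0` and `1`. -/
def Ends01 (l : List ℕ) : Prop :=
  (l.head? = some 0 ∧ l.getLast? = some 1) ∨
    (l.head? = some 1 ∧ l.getLast? = some 0)

/-- The run through the even congruence class visited at step `j`:
class `0` ascending for `j = 0`, then classes `t−2, t−4, …, 2`,
alternately descending and ascending. -/
def evenRun (t k j : ℕ) : List ℕ :=
  if j = 0 then (List.range (k+2)).map (fun i => t*i)
  else if j % 2 = 1 then (List.range (k+1)).map (fun i => (t - 2*j) + t*(k - i))
  else (List.range (k+1)).map (fun i => (t - 2*j) + t*i)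

/-- The run through the odd congruence class `2j+1`,
alternately descending and ascending, starting with class `1` descending. -/
def oddRun (t k j : ℕ) : List ℕ :=
  if j % 2 = 0 then (List.range (k+1)).map (fun i => (2*j+1) + t*(k - i))
  else (List.range (k+1)).map (fun i => (2*j+1) + t*i)

/-- The path `[0→tk+t, tk+t−2→t−2, …, 2→tk+2, tk+1→1, 3→tk+3, …, tk+t−1→t−1]`,
where `x→y` denotes an arithmetic progression with common difference `±t`. -/
def zigzagPath (t k : ℕ) : List ℕ :=
  ((List.range (t/2)).map (evenRun t k)).flatten ++
  ((List.range (t/2)).map (oddRun t k)).flatten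

/-!
Each residue class modulo `t` is traversed by one run of steps `t`: first the even classes
`0, t - 2, …, 2`, then the odd classes `1, 3, …, t - 1`, in alternating directions, so that
consecutive runs of the same parity are joined by a step `2`. Since `t ≡ 2 (mod 4)`, the run of
the class `2` is an ascending one and ends at `tk + 2`, while the run of the class `1` starts at
`tk + 1`: the two halves are joined by the single step `1`. Runs of distinct classes are disjoint,
so the path is injective, and its `tk + t + 1` entries lie in `[0, tk + t]`; the `t` runs
contribute `tk + 1` steps `t`, the class `0` having one element more than the others.
-/

lemma pathDiffs_cons_cons (a b : ℕ) (l : List ℕ) :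
    pathDiffs (a :: b :: l) = (max a b - min a b) ::ₘ pathDiffs (b :: l) := rfl

lemma pathDiffs_append {l₁ l₂ : List ℕ} {x y : ℕ} (hx : l₁.getLast? = some x)
    (hy : l₂.head? = some y) :
    pathDiffs (l₁ ++ l₂) = pathDiffs l₁ + (max x y - min x y) ::ₘ pathDiffs l₂ := by
  induction l₁ with
  | nil => simp at hx
  | cons a l ih =>
    cases l with
    | nil =>
      cases l₂ with
      | nil => simp at hy
      | cons b l₂ =>
        obtain ⟨rfl, rfl⟩ : a = x ∧ b = y := by simp_all
        simp [pathDiffs]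
    | cons b l =>
      rw [List.cons_append, List.cons_append, pathDiffs_cons_cons, ← List.cons_append,
        ih (by simpa using hx), pathDiffs_cons_cons, Multiset.cons_add]

lemma pathDiffs_eq_replicate {d : ℕ} :
    ∀ {l : List ℕ}, l.IsChain (fun a b => max a b - min a b = d) →
      pathDiffs l = Multiset.replicate (l.length - 1) d
  | [], _ => rfl
  | [_], _ => rfl
  | a :: b :: l, h => by
    rw [List.isChain_cons_cons] at h
    rw [pathDiffs_cons_cons, h.1, pathDiffs_eq_replicate h.2]
    simp [Multiset.replicate_succ]

lemma length_le_length_flatten {α : Type*} :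
    ∀ {L : List (List α)}, (∀ l ∈ L, l ≠ []) → L.length ≤ L.flatten.length
  | [], _ => le_rfl
  | l :: L, hne => by
    have hl := List.length_pos_of_ne_nil (hne l List.mem_cons_self)
    have := length_le_length_flatten fun l' hl' => hne l' (List.mem_cons_of_mem l hl')
    simp only [List.length_cons, List.flatten_cons, List.length_append]
    omega

lemma pathDiffs_flatten {d g : ℕ} :
    ∀ {L : List (List ℕ)}, (∀ l ∈ L, l ≠ []) →
      (∀ l ∈ L, l.IsChain (fun a b => max a b - min a b = d)) →
      L.IsChain (fun l₁ l₂ => ∀ x ∈ l₁.getLast?, ∀ y ∈ l₂.head?, max x y - min x y = g) →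
      pathDiffs L.flatten =
        Multiset.replicate (L.flatten.length - L.length) d +
          Multiset.replicate (L.length - 1) g
  | [], _, _, _ => rfl
  | [l], _, hrun, _ => by simpa using pathDiffs_eq_replicate (hrun l (by simp))
  | l₁ :: l₂ :: L, hne, hrun, hgap => by
    have h₁ := hne l₁ (by simp)
    have h₂ := hne l₂ (by simp)
    have hx := List.getLast?_eq_some_getLast h₁
    have hy : (l₂ :: L).flatten.head? = some (l₂.head h₂) := by
      rw [List.flatten_cons, List.head?_append_of_ne_nil _ h₂, List.head?_eq_some_head h₂]
    rw [List.isChain_cons_cons] at hgap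
    have htail := length_le_length_flatten fun l hl => hne l (List.mem_cons_of_mem l₁ hl)
    have hlen := List.length_pos_of_ne_nil h₁
    rw [List.flatten_cons, pathDiffs_append hx hy, hgap.1 _ hx _ (List.head?_eq_some_head h₂),
      pathDiffs_eq_replicate (hrun l₁ (by simp)),
      pathDiffs_flatten (fun l hl => hne l (List.mem_cons_of_mem l₁ hl))
        (fun l hl => hrun l (List.mem_cons_of_mem l₁ hl)) hgap.2]
    refine Multiset.ext.mpr fun c => ?_
    simp only [Multiset.count_add, Multiset.count_cons, Multiset.count_replicate,
      List.length_append, List.length_cons] at htail ⊢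
    split_ifs <;> omega

lemma flatten_map_range_succ {α : Type*} (f : ℕ → List α) (n : ℕ) :
    ((List.range (n + 1)).map f).flatten = ((List.range n).map f).flatten ++ f n := by
  simp [List.range_succ]

lemma head?_flatten_map_range_succ {α : Type*} {f : ℕ → List α} (h : f 0 ≠ []) (n : ℕ) :
    ((List.range (n + 1)).map f).flatten.head? = (f 0).head? := by
  rw [List.range_succ_eq_map, List.map_cons, List.flatten_cons, List.head?_append_of_ne_nil _ h]

lemma getLast?_flatten_map_range_succ {α : Type*} {f : ℕ → List α} {n : ℕ} (h : f n ≠ []) :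
    ((List.range (n + 1)).map f).flatten.getLast? = (f n).getLast? := by
  rw [flatten_map_range_succ, List.getLast?_append_of_ne_nil _ h]

lemma head?_map_range_succ {α : Type*} (g : ℕ → α) (n : ℕ) :
    ((List.range (n + 1)).map g).head? = some (g 0) := by
  simp [List.head?_range]

lemma getLast?_map_range_succ {α : Type*} (g : ℕ → α) (n : ℕ) :
    ((List.range (n + 1)).map g).getLast? = some (g n) := by
  simp [List.getLast?_range]

lemma nodup_flatten_map_range {α β : Type*} {f : ℕ → List α} {n : ℕ} (key : α → β)
    (ρ : ℕ → β) (hf : ∀ j < n, (f j).Nodup) (hkey : ∀ j < n, ∀ x ∈ f j, key x = ρ j)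
    (hρ : Set.InjOn ρ (Set.Iio n)) : ((List.range n).map f).flatten.Nodup := by
  rw [List.nodup_flatten, List.pairwise_map]
  refine ⟨by simpa using hf, List.nodup_range.pairwise_of_forall_ne fun i hi j hj hij => ?_⟩
  rw [List.mem_range] at hi hj
  exact List.disjoint_left.2 fun x hxi hxj =>
    hij (hρ hi hj ((hkey i hi x hxi).symm.trans (hkey j hj x hxj)))

lemma perm_range_of_nodup {l : List ℕ} {n : ℕ} (hl : l.Nodup) (hlt : ∀ x ∈ l, x < n)
    (hlen : l.length = n) : l.Perm (List.range n) :=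
  (hl.subperm fun x hx => List.mem_range.2 (hlt x hx)).perm_of_length_le (by simp [hlen])

def IsRun (c n d : ℕ) (l : List ℕ) : Prop :=
  l = List.range' c n d ∨ l = (List.range' c n d).reverse

namespace IsRun

variable {c n d : ℕ} {l : List ℕ}

lemma length_eq (h : IsRun c n d l) : l.length = n := by
  rcases h with rfl | rfl <;> simp

lemma mem_iff (h : IsRun c n d l) {x : ℕ} : x ∈ l ↔ ∃ i < n, x = c + d * i := by
  rcases h with rfl | rfl <;> simp [List.mem_range']

lemma nodup (h : IsRun c n d l) (hd : 0 < d) : l.Nodup := by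
  rcases h with rfl | rfl
  · exact List.nodup_range' d hd
  · exact List.nodup_reverse.2 (List.nodup_range' d hd)

lemma isChain (h : IsRun c n d l) : l.IsChain (fun a b => max a b - min a b = d) := by
  have hup : (List.range' c n d).IsChain (fun a b => max a b - min a b = d) :=
    (List.isChain_range' c n d).imp fun a b hab => by omega
  rcases h with rfl | rfl
  · exact hup
  · exact List.isChain_reverse.2 (hup.imp fun a b hab => by omega)

end IsRun

lemma isRun_map_range (c n d : ℕ) : IsRun c n d ((List.range n).map (fun i => c + d * i)) :=
  Or.inl <| List.ext_getElem (by simp) fun i _ _ => by simp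

lemma isRun_map_range_sub (c n d : ℕ) :
    IsRun c (n + 1) d ((List.range (n + 1)).map (fun i => c + d * (n - i))) :=
  Or.inr <| List.ext_getElem (by simp) fun i _ _ => by simp [List.getElem_reverse]

section Runs

variable {t k j x : ℕ}

lemma isRun_evenRun_zero : IsRun 0 (k + 2) t (evenRun t k 0) := by
  simpa [evenRun] using isRun_map_range 0 (k + 2) t

lemma isRun_evenRun (hj : j ≠ 0) : IsRun (t - 2 * j) (k + 1) t (evenRun t k j) := by
  rw [evenRun, if_neg hj]
  split_ifs
  · exact isRun_map_range_sub _ _ _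
  · exact isRun_map_range _ _ _

lemma isRun_oddRun : IsRun (2 * j + 1) (k + 1) t (oddRun t k j) := by
  unfold oddRun
  split_ifs
  · exact isRun_map_range_sub _ _ _
  · exact isRun_map_range _ _ _

lemma length_evenRun : (evenRun t k j).length = if j = 0 then k + 2 else k + 1 := by
  split_ifs with hj
  · exact hj ▸ isRun_evenRun_zero.length_eq
  · exact (isRun_evenRun hj).length_eq

lemma isChain_evenRun : (evenRun t k j).IsChain (fun a b => max a b - min a b = t) := by
  rcases eq_or_ne j 0 with rfl | hj
  · exact isRun_evenRun_zero.isChain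
  · exact (isRun_evenRun hj).isChain

lemma evenRun_ne_nil : evenRun t k j ≠ [] := by
  rw [← List.length_pos_iff, length_evenRun]
  split_ifs <;> omega

lemma oddRun_ne_nil : oddRun t k j ≠ [] := by
  rw [← List.length_pos_iff, isRun_oddRun.length_eq]
  omega

lemma evenRun_gap (hj : 2 * (j + 1) < t) :
    ∀ x ∈ (evenRun t k j).getLast?, ∀ y ∈ (evenRun t k (j + 1)).head?,
      max x y - min x y = 2 := by
  intro x hx y hy
  simp only [evenRun, Nat.add_one_ne_zero, if_false] at hx hy
  split_ifs at hx hy <;>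
    simp only [getLast?_map_range_succ, head?_map_range_succ, Option.mem_def, Option.some.injEq,
      Nat.sub_self, Nat.sub_zero, Nat.mul_zero, Nat.add_zero, Nat.mul_succ] at hx hy <;>
    omega

lemma oddRun_gap :
    ∀ x ∈ (oddRun t k j).getLast?, ∀ y ∈ (oddRun t k (j + 1)).head?,
      max x y - min x y = 2 := by
  intro x hx y hy
  simp only [oddRun] at hx hy
  split_ifs at hx hy <;>
    simp only [getLast?_map_range_succ, head?_map_range_succ, Option.mem_def, Option.some.injEq,
      Nat.sub_self, Nat.sub_zero, Nat.mul_zero, Nat.add_zero] at hx hy <;>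
    omega

lemma nodup_evenRun (ht : 0 < t) : (evenRun t k j).Nodup := by
  rcases eq_or_ne j 0 with rfl | hj
  · exact isRun_evenRun_zero.nodup ht
  · exact (isRun_evenRun hj).nodup ht

lemma mod_of_mem_evenRun (hx : x ∈ evenRun t k j) : x % t = (t - 2 * j) % t := by
  rcases eq_or_ne j 0 with rfl | hj
  · obtain ⟨i, -, rfl⟩ := isRun_evenRun_zero.mem_iff.1 hx
    simp
  · obtain ⟨i, -, rfl⟩ := (isRun_evenRun hj).mem_iff.1 hx
    simp

lemma mod_of_mem_oddRun (hx : x ∈ oddRun t k j) : x % t = (2 * j + 1) % t := by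
  obtain ⟨i, -, rfl⟩ := isRun_oddRun.mem_iff.1 hx
  simp

lemma le_of_mem_evenRun (hx : x ∈ evenRun t k j) : x ≤ t * k + t := by
  rcases eq_or_ne j 0 with rfl | hj
  · obtain ⟨i, hi, rfl⟩ := isRun_evenRun_zero.mem_iff.1 hx
    have := Nat.mul_le_mul_left t (show i ≤ k + 1 by omega)
    rw [Nat.mul_succ] at this
    omega
  · obtain ⟨i, hi, rfl⟩ := (isRun_evenRun hj).mem_iff.1 hx
    have := Nat.mul_le_mul_left t (show i ≤ k by omega)
    omega

lemma le_of_mem_oddRun (hj : 2 * j < t) (hx : x ∈ oddRun t k j) : x ≤ t * k + t := by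
  obtain ⟨i, hi, rfl⟩ := isRun_oddRun.mem_iff.1 hx
  have := Nat.mul_le_mul_left t (show i ≤ k by omega)
  omega

lemma even_of_mem_evenRun (ht : Even t) (hx : x ∈ evenRun t k j) : Even x := by
  have h2 := even_iff_two_dvd.1 ht
  rw [Nat.even_iff, ← Nat.mod_mod_of_dvd x h2, mod_of_mem_evenRun hx, Nat.mod_mod_of_dvd _ h2]
  omega

lemma odd_of_mem_oddRun (ht : Even t) (hx : x ∈ oddRun t k j) : Odd x := by
  have h2 := even_iff_two_dvd.1 ht
  rw [Nat.odd_iff, ← Nat.mod_mod_of_dvd x h2, mod_of_mem_oddRun hx, Nat.mod_mod_of_dvd _ h2]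
  omega

end Runs

section Halves

variable {t k n : ℕ}

lemma length_flatten_evenRun :
    ((List.range (n + 1)).map (evenRun t k)).flatten.length = (n + 1) * (k + 1) + 1 := by
  induction n with
  | zero => simp [length_evenRun]
  | succ n ih =>
    rw [flatten_map_range_succ, List.length_append, ih, length_evenRun, if_neg n.succ_ne_zero]
    ring

lemma length_flatten_oddRun :
    ((List.range n).map (oddRun t k)).flatten.length = n * (k + 1) := by
  induction n with
  | zero => simp
  | succ n ih =>
    rw [flatten_map_range_succ, List.length_append, ih, isRun_oddRun.length_eq]
    ring

lemma pathDiffs_flatten_evenRun (h : 2 * n < t) :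
    pathDiffs ((List.range (n + 1)).map (evenRun t k)).flatten =
      Multiset.replicate ((n + 1) * k + 1) t + Multiset.replicate n 2 := by
  rw [pathDiffs_flatten, length_flatten_evenRun, List.length_map, List.length_range,
    show (n + 1) * (k + 1) + 1 = (n + 1) * k + 1 + (n + 1) by ring, Nat.add_sub_cancel,
    Nat.add_sub_cancel]
  · simp [evenRun_ne_nil]
  · simp [isChain_evenRun]
  · exact (List.isChain_map _).2 <|
      (List.isChain_range_succ _ _).2 fun j hj => evenRun_gap (by omega)

lemma pathDiffs_flatten_oddRun :
    pathDiffs ((List.range (n + 1)).map (oddRun t k)).flatten =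
      Multiset.replicate ((n + 1) * k) t + Multiset.replicate n 2 := by
  rw [pathDiffs_flatten, length_flatten_oddRun, List.length_map, List.length_range,
    show (n + 1) * (k + 1) = (n + 1) * k + (n + 1) by ring, Nat.add_sub_cancel,
    Nat.add_sub_cancel]
  · simp [oddRun_ne_nil]
  · simp [isRun_oddRun.isChain]
  · exact (List.isChain_map _).2 <| (List.isChain_range_succ _ _).2 fun _ _ => oddRun_gap

lemma nodup_flatten_evenRun (h : 2 * n ≤ t) :
    ((List.range n).map (evenRun t k)).flatten.Nodup := by
  refine nodup_flatten_map_range (· % t) (fun j => (t - 2 * j) % t)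
    (fun j hj => nodup_evenRun (by omega)) (fun j _ x hx => mod_of_mem_evenRun hx) ?_
  have hρ : ∀ i < n, (t - 2 * i) % t = if i = 0 then 0 else t - 2 * i := by
    intro i hi
    split_ifs with hi0
    · simp [hi0]
    · exact Nat.mod_eq_of_lt (by omega)
  intro i (hi : i < n) j (hj : j < n) (hij : (t - 2 * i) % t = (t - 2 * j) % t)
  rw [hρ i hi, hρ j hj] at hij
  split_ifs at hij <;> omega

lemma nodup_flatten_oddRun (h : 2 * n ≤ t) :
    ((List.range n).map (oddRun t k)).flatten.Nodup := by
  refine nodup_flatten_map_range (· % t) (fun j => (2 * j + 1) % t)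
    (fun j hj => isRun_oddRun.nodup (by omega)) (fun j _ x hx => mod_of_mem_oddRun hx) ?_
  intro i (hi : i < n) j (hj : j < n) (hij : (2 * i + 1) % t = (2 * j + 1) % t)
  rw [Nat.mod_eq_of_lt (by omega), Nat.mod_eq_of_lt (by omega)] at hij
  omega

lemma getLast?_flatten_evenRun (hn : n % 2 = 0) :
    ((List.range (n + 1)).map (evenRun t k)).flatten.getLast? = some (t - 2 * n + t * k) := by
  rw [getLast?_flatten_map_range_succ evenRun_ne_nil, evenRun]
  split_ifs with h0 h1
  · simp [h0, List.getLast?_range, Nat.mul_succ, Nat.add_comm]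
  · omega
  · rw [getLast?_map_range_succ]

lemma head?_flatten_oddRun :
    ((List.range (n + 1)).map (oddRun t k)).flatten.head? = some (1 + t * k) := by
  rw [head?_flatten_map_range_succ oddRun_ne_nil, oddRun, if_pos rfl, head?_map_range_succ]
  simp

end Halves

section ZigzagPath

variable {t k : ℕ}

lemma length_zigzagPath (ht : Even t) (h0 : t ≠ 0) :
    (zigzagPath t k).length = t * k + t + 1 := by
  obtain ⟨m, rfl⟩ := ht
  obtain ⟨n, rfl⟩ : ∃ n, m = n + 1 := ⟨m - 1, by omega⟩
  rw [zigzagPath, List.length_append, show (n + 1 + (n + 1)) / 2 = n + 1 by omega,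
    length_flatten_evenRun, length_flatten_oddRun]
  ring

lemma nodup_zigzagPath (ht : Even t) : (zigzagPath t k).Nodup := by
  rw [zigzagPath, List.nodup_append]
  refine ⟨nodup_flatten_evenRun (by omega), nodup_flatten_oddRun (by omega), ?_⟩
  simp only [List.mem_flatten, List.mem_map, List.mem_range]
  rintro a ⟨_, ⟨i, -, rfl⟩, ha⟩ b ⟨_, ⟨j, -, rfl⟩, hb⟩ rfl
  exact Nat.not_even_iff_odd.2 (odd_of_mem_oddRun ht hb) (even_of_mem_evenRun ht ha)

lemma le_of_mem_zigzagPath {x : ℕ} (hx : x ∈ zigzagPath t k) : x ≤ t * k + t := by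
  simp only [zigzagPath, List.mem_append, List.mem_flatten, List.mem_map, List.mem_range] at hx
  rcases hx with ⟨_, ⟨j, -, rfl⟩, hx⟩ | ⟨_, ⟨j, hj, rfl⟩, hx⟩
  · exact le_of_mem_evenRun hx
  · exact le_of_mem_oddRun (by omega) hx

end ZigzagPath

theorem stmt18_general (t k : ℕ) (hmod : t % 4 = 2) :
    IsLinReal ({1} + Multiset.replicate (t-2) 2 + Multiset.replicate (t*k+1) t)
      (zigzagPath t k) := by
  have ht : Even t := Nat.even_iff.2 (by omega)
  have hcard : Multiset.card ({1} + Multiset.replicate (t-2) 2 + Multiset.replicate (t*k+1) t)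
      = t * k + t := by
    simp only [Multiset.card_add, Multiset.card_singleton, Multiset.card_replicate]
    omega
  refine ⟨hcard ▸ perm_range_of_nodup (nodup_zigzagPath ht)
    (fun x hx => Nat.lt_succ_of_le (le_of_mem_zigzagPath hx)) (length_zigzagPath ht (by omega)), ?_⟩
  obtain ⟨n, hn⟩ : ∃ n, t / 2 = n + 1 := ⟨t / 2 - 1, by omega⟩
  have htk : t * k = 2 * ((n + 1) * k) := by rw [show t = 2 * (n + 1) by omega]; ring
  rw [zigzagPath, hn, pathDiffs_append (getLast?_flatten_evenRun (by omega)) head?_flatten_oddRun,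
    pathDiffs_flatten_evenRun (by omega), pathDiffs_flatten_oddRun]
  refine Multiset.ext.mpr fun c => ?_
  simp only [Multiset.count_add, Multiset.count_cons, Multiset.count_replicate,
    Multiset.count_singleton]
  split_ifs <;> omega

theorem stmt18 (t k : ℕ) (h6 : 6 ≤ t) (hmod : t % 4 = 2) :
    IsLinReal ({1} + Multiset.replicate (t-2) 2 + Multiset.replicate (t*k+1) t)
      (zigzagPath t k) :=
  stmt18_general t k hmod
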